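/- Let K be a number field, let f : P^1 → P^1 be a rational map of degree d ≥ 2 defined over K, and let α ∈ P^1(K). If f is a power map, i.e. f is PGL_2(K̄)-conjugate to x^d or to x^{−d}, then the Minkowski dimension dim(G_{f,α}) exists and dim(G_{f,α}) = 0. -/

import Mathlib

open scoped Classical

noncomputable section

/-! ### Minkowski dimension machinery for groups of automorphisms of rooted trees

A rooted tree is presented by its levels `V 0, V 1, V 2, …` (with `V 0` the root level)
together with parent maps `V (n+1) → V n`.  An automorphism is a family of permutations
of the levels commuting with the parent maps; it is in particular determined by a point of
`∀ k, Equiv.Perm (V k)`.  The restriction `r_n σ` of `σ` to the height-`n` subtree is the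
tuple `(σ 0, …, σ n)`, and the natural metric is
`d(σ,τ) = inf { d!^{-(dⁿ-1)/(d-1)} : r_n σ = r_n τ }`. -/

/-- The exponent `(dⁿ - 1)/(d - 1) = 1 + d + ⋯ + d^(n-1)`. -/
def scaleExp (d n : ℕ) : ℕ := ∑ i ∈ Finset.range n, d ^ i

/-- The scale `ε_n = d!^{-(dⁿ-1)/(d-1)}`, i.e. `1/|Aut(Tₙᶜᵒᵐ)|`. -/
def treeScale (d n : ℕ) : ℝ := ((d.factorial : ℝ) ^ scaleExp d n)⁻¹

/-- Two families of level permutations restrict to the same automorphism of the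
height-`n` subtree. -/
def AgreeUpTo {V : ℕ → Type*} (n : ℕ) (σ τ : ∀ k, Equiv.Perm (V k)) : Prop :=
  ∀ k, k ≤ n → σ k = τ k

/-- The natural metric on automorphisms of a rooted `d`-ary tree:
`d(σ,τ) = inf { d!^{-(dⁿ-1)/(d-1)} : σ and τ agree on the height-n subtree }`. -/
def treeDist {V : ℕ → Type*} (d : ℕ) (σ τ : ∀ k, Equiv.Perm (V k)) : ℝ :=
  sInf {x : ℝ | ∃ n : ℕ, AgreeUpTo n σ τ ∧ x = treeScale d n}

/-- `N_{ε_n}(G)`: the least number of balls of radius `ε_n = treeScale d n` needed to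
cover `G`. -/
def coverNum {V : ℕ → Type*} (d : ℕ) (G : Set (∀ k, Equiv.Perm (V k))) (n : ℕ) : ℕ :=
  sInf {m : ℕ | ∃ s : Finset (∀ k, Equiv.Perm (V k)), s.card = m ∧
    G ⊆ ⋃ σ ∈ s, {τ | treeDist d σ τ ≤ treeScale d n}}

/-- The lower Minkowski dimension `liminf_{ε → 0} log N_ε(G) / log (1/ε)` (computed
along the scales `ε_n` of the metric). -/
def dimLower {V : ℕ → Type*} (d : ℕ) (G : Set (∀ k, Equiv.Perm (V k))) : ℝ :=
  Filter.liminf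
    (fun n : ℕ => Real.log (coverNum d G n : ℝ) / Real.log (1 / treeScale d n)) Filter.atTop

/-- The upper Minkowski dimension `limsup_{ε → 0} log N_ε(G) / log (1/ε)` (computed
along the scales `ε_n` of the metric). -/
def dimUpper {V : ℕ → Type*} (d : ℕ) (G : Set (∀ k, Equiv.Perm (V k))) : ℝ :=
  Filter.limsup
    (fun n : ℕ => Real.log (coverNum d G n : ℝ) / Real.log (1 / treeScale d n)) Filter.atTop

/-- The Minkowski dimension of `G` exists and equals `x`. -/
def HasDim {V : ℕ → Type*} (d : ℕ) (G : Set (∀ k, Equiv.Perm (V k))) (x : ℝ) : Prop :=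
  dimLower d G = x ∧ dimUpper d G = x

/-- `G` is closed for the natural metric. -/
def IsDistClosed {V : ℕ → Type*} (d : ℕ) (G : Set (∀ k, Equiv.Perm (V k))) : Prop :=
  ∀ σ, (∀ ε : ℝ, 0 < ε → ∃ τ ∈ G, treeDist d σ τ ≤ ε) → σ ∈ G

/-- The closure of `G` for the natural metric. -/
def distClosure {V : ℕ → Type*} (d : ℕ) (G : Set (∀ k, Equiv.Perm (V k))) :
    Set (∀ k, Equiv.Perm (V k)) :=
  {σ | ∀ ε : ℝ, 0 < ε → ∃ τ ∈ G, treeDist d σ τ ≤ ε}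

/-- `|r_n(G)|`: the cardinality of the restriction of `G` to the height-`n` subtree. -/
def levelCard {V : ℕ → Type*} (G : Set (∀ k, Equiv.Perm (V k))) (n : ℕ) : ℕ :=
  Nat.card ((fun (σ : ∀ k, Equiv.Perm (V k)) (k : Fin (n + 1)) => σ k.1) '' G)

end
noncomputable section

/-- A fixed algebraic closure `K̄` of `K`. -/
abbrev Kbar (K : Type*) [Field K] : Type _ := AlgebraicClosure K

/-- The level-`n` vertices of the preimage tree of `α` under `φ`: the set
`φ^{-n}(α)`. -/
abbrev preV {Pts : Type*} (φ : Pts → Pts) (α : Pts) (n : ℕ) : Type _ :=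
  {β : Pts // φ^[n] β = α}

/-- The parent map of the preimage tree: a vertex `β ∈ φ^{-(n+1)}(α)` is joined to
`φ(β) ∈ φ^{-n}(α)`. -/
def preParent {Pts : Type*} (φ : Pts → Pts) (α : Pts) (n : ℕ)
    (β : preV φ α (n + 1)) : preV φ α n :=
  ⟨φ β.1, by have h := β.2; rwa [Function.iterate_succ_apply] at h⟩

/-- The image `G_{φ,α}` of the arboreal Galois representation attached to `(φ, α)` over
the base field `L` (an intermediate field of `K̄/K`): the set of families of level
permutations of the preimage tree induced by elements of `Gal(K̄/L)`, acting on points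
via `act`. -/
def arbGal {K : Type*} [Field K] {Pts : Type*}
    (act : (Kbar K ≃ₐ[K] Kbar K) → Pts → Pts) (L : IntermediateField K (Kbar K))
    (φ : Pts → Pts) (α : Pts) : Set (∀ n, Equiv.Perm (preV φ α n)) :=
  {g | ∃ σ : Kbar K ≃ₐ[K] Kbar K, (∀ x ∈ L, σ x = x) ∧
    ∀ (n : ℕ) (β : preV φ α n), (g n β : Pts) = act σ (β : Pts)}

end
noncomputable section

/-- The projective line `ℙ¹(L) = L ∪ {∞}`, with `none` the point at infinity. -/
abbrev P1 (L : Type*) := Option L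

/-- The action on `ℙ¹(A)` of the rational map `f = p/q` with coefficients in `K`,
for an extension field `A` of `K`.  At a finite point `x` the value is `p(x)/q(x)`
(`∞` when `q(x) = 0`), and the value at `∞` is governed by the degrees of `p` and
`q` and their leading coefficients. -/
def ratAct {K : Type*} [Field K] (p q : Polynomial K)
    (A : Type*) [Field A] [Algebra K A] : P1 A → P1 A
  | some x =>
      if Polynomial.aeval x q = 0 then none
      else some (Polynomial.aeval x p / Polynomial.aeval x q)
  | none =>
      if q.natDegree < p.natDegree then none
      else if p.natDegree < q.natDegree then some 0
      else some (algebraMap K A (p.leadingCoeff / q.leadingCoeff))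

/-- The natural action of `Gal(K̄/K)` on `ℙ¹(K̄)`. -/
def galP1 {K : Type*} [Field K] (σ : Kbar K ≃ₐ[K] Kbar K) : P1 (Kbar K) → P1 (Kbar K) :=
  Option.map σ

/-- The inclusion `ℙ¹(K) ⊆ ℙ¹(K̄)`. -/
def P1K {K : Type*} [Field K] : P1 K → P1 (Kbar K) :=
  Option.map (algebraMap K (Kbar K))

/-- The set of `L`-rational points of `ℙ¹(K̄)`, for an intermediate field `L` of
`K̄/K`. -/
def P1Rat {K : Type*} [Field K] (L : IntermediateField K (Kbar K)) : Set (P1 (Kbar K)) :=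
  {β | β = none ∨ ∃ x ∈ L, β = some x}

/-- The Möbius transformation of `ℙ¹(F)` attached to `(a b; c e) ∈ PGL₂(F)`. -/
def moebius {F : Type*} [Field F] (a b c e : F) : P1 F → P1 F
  | some x => if c * x + e = 0 then none else some ((a * x + b) / (c * x + e))
  | none => if c = 0 then none else some (a / c)

/-- The normalizing constant `C_D = log(D!)/(D-1)`. -/
def Cconst (D : ℕ) : ℝ := Real.log (D.factorial : ℝ) / ((D : ℝ) - 1)

/-- The ramification multiplicity at a point `γ ∈ ℙ¹(A)` of the degree-`d` rational
map `f = p/q` with coefficients in `K ⊆ A`:  at a finite point `γ` with `f(γ) = c`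
finite it is the order of vanishing of `p - c·q` at `γ`; the cases involving `∞` are
handled using `q` and degrees.  A point is critical when this is at least `2`. -/
def multAt {K : Type*} [Field K] (p q : Polynomial K)
    (A : Type*) [Field A] [Algebra K A] (d : ℕ) : P1 A → ℕ
  | some x =>
      match ratAct p q A (some x) with
      | some c => ((p.map (algebraMap K A)) -
          Polynomial.C c * (q.map (algebraMap K A))).rootMultiplicity x
      | none => (q.map (algebraMap K A)).rootMultiplicity x
  | none =>
      match ratAct p q A none with
      | some c => d - ((p.map (algebraMap K A)) -
          Polynomial.C c * (q.map (algebraMap K A))).natDegree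
      | none => d - q.natDegree

end

/-!
A Möbius transformation `μ` with coefficients in `F₀ = K(a, b, c, e)` conjugates `f` to
`z ↦ z^{±d}`. Hence `μ` maps every vertex of height `k ≤ n` of the preimage tree of `α` to
`0`, `∞`, or a `d^k`-th root of `z^{±1}`, where `z = μ(α)`; all of these are rational over
`F₀(ζ, γ)` with `ζ` a primitive `d^n`-th root of unity and `γ^{d^n} = z`. This field has
degree `O(d^{2n})` over `K`, and a Galois element acts on the height-`n` subtree through its
restriction to it, so `N_{ε_n}(G) = O(d^{2n})`. As `log (1/ε_n) ≥ 2^{n-1} log 2`, the ratio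
`log N_{ε_n}(G) / log (1/ε_n)` tends to `0`.
-/

open Filter Topology Polynomial IntermediateField Module

section TreeDimension

variable {V : ℕ → Type*}

def restrictTo (n : ℕ) (σ : ∀ k, Equiv.Perm (V k)) : ∀ k : Fin (n + 1), Equiv.Perm (V k) :=
  fun k => σ k

theorem treeDist_le_of_agreeUpTo {d n : ℕ} {σ τ : ∀ k, Equiv.Perm (V k)}
    (h : AgreeUpTo n σ τ) : treeDist d σ τ ≤ treeScale d n :=
  csInf_le ⟨0, fun _ ⟨m, _, hx⟩ => hx ▸ by unfold treeScale; positivity⟩ ⟨n, h, rfl⟩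

theorem coverNum_le_levelCard (d n : ℕ) {G : Set (∀ k, Equiv.Perm (V k))}
    (hG : (restrictTo n '' G).Finite) : coverNum d G n ≤ levelCard G n := by
  obtain ⟨s, -, hinj, hs⟩ := (Set.surjOn_image (restrictTo n) G).exists_subset_injOn_image_eq
  have hsfin : s.Finite := Set.Finite.of_finite_image (hs ▸ hG) hinj
  have hcover : G ⊆ ⋃ σ ∈ hsfin.toFinset, {τ | treeDist d σ τ ≤ treeScale d n} := by
    intro τ hτ
    obtain ⟨σ, hσ, hστ⟩ : restrictTo n τ ∈ restrictTo n '' s := hs ▸ ⟨τ, hτ, rfl⟩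
    exact Set.mem_biUnion (hsfin.mem_toFinset.2 hσ)
      (treeDist_le_of_agreeUpTo fun k hk => congrFun hστ ⟨k, Nat.lt_succ_of_le hk⟩)
  calc coverNum d G n ≤ hsfin.toFinset.card := Nat.sInf_le ⟨_, rfl, hcover⟩
    _ = levelCard G n := by
      rw [levelCard, ← Set.ncard_eq_toFinset_card _ hsfin, ← Nat.card_coe_set_eq,
        ← Nat.card_image_of_injOn hinj, hs]
      rfl

theorem log_one_div_treeScale (d n : ℕ) :
    Real.log (1 / treeScale d n) = scaleExp d n * Real.log d.factorial := by
  rw [treeScale, one_div, inv_inv, Real.log_pow]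

theorem two_pow_le_scaleExp {d : ℕ} (hd : 2 ≤ d) (n : ℕ) : 2 ^ n ≤ scaleExp d (n + 1) :=
  (Nat.pow_le_pow_left hd n).trans <|
    Finset.single_le_sum (f := (d ^ ·)) (fun _ _ => Nat.zero_le _) (Finset.self_mem_range_succ n)

theorem log_natCast_le_of_le_mul_pow {m C B k : ℕ} (h : m ≤ C * B ^ k) :
    Real.log m ≤ Real.log (C + 1) + k * Real.log (B + 1) := by
  rcases m.eq_zero_or_pos with rfl | hm
  · rw [Nat.cast_zero, Real.log_zero]
    exact add_nonneg (Real.log_nonneg (by simp))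
      (mul_nonneg k.cast_nonneg (Real.log_nonneg (by simp)))
  -- `C` or `B` may vanish; passing to `C + 1, B + 1` makes `Real.log_mul` applicable.
  have hle : (m : ℝ) ≤ (C + 1) * (B + 1) ^ k := by
    exact_mod_cast h.trans (Nat.mul_le_mul C.le_succ (Nat.pow_le_pow_left B.le_succ k))
  calc Real.log m ≤ Real.log ((C + 1) * (B + 1) ^ k) := Real.log_le_log (by exact_mod_cast hm) hle
    _ = Real.log (C + 1) + k * Real.log (B + 1) := by
      rw [Real.log_mul (by positivity) (by positivity), Real.log_pow]

theorem hasDim_zero_of_coverNum_le {d : ℕ} (hd : 2 ≤ d) {G : Set (∀ k, Equiv.Perm (V k))}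
    (C B : ℕ) (hG : ∀ n, coverNum d G n ≤ C * B ^ n) : HasDim d G 0 := by
  set f := fun n => Real.log (coverNum d G n) / Real.log (1 / treeScale d n)
  set a := Real.log (C + 1)
  set b := Real.log (B + 1)
  have hlog2 : 0 < Real.log 2 := Real.log_pos one_lt_two
  have hden : ∀ n : ℕ, 2 ^ n * Real.log 2 ≤ Real.log (1 / treeScale d (n + 1)) := fun n => by
    rw [log_one_div_treeScale]
    gcongr
    · exact_mod_cast two_pow_le_scaleExp hd n
    · exact_mod_cast hd.trans d.self_le_factorial
  have hbound : ∀ n : ℕ,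
      f (n + 1) ≤ ((a + b) * (1 / 2) ^ n + b * (n * (1 / 2) ^ n)) / Real.log 2 := fun n => by
    have hnum := log_natCast_le_of_le_mul_pow (hG (n + 1))
    calc f (n + 1) ≤ (a + (n + 1 : ℕ) * b) / (2 ^ n * Real.log 2) :=
          div_le_div₀ ((Real.log_natCast_nonneg _).trans hnum) hnum (by positivity) (hden n)
      _ = _ := by rw [div_pow, one_pow]; field_simp; push_cast; ring
  have hlim : Tendsto (fun n : ℕ => ((a + b) * (1 / 2) ^ n + b * (n * (1 / 2) ^ n)) / Real.log 2)
      atTop (𝓝 0) := by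
    simpa using (((tendsto_pow_atTop_nhds_zero_of_lt_one one_half_pos.le one_half_lt_one).const_mul
      (a + b)).add ((tendsto_self_mul_const_pow_of_lt_one one_half_pos.le one_half_lt_one).const_mul
      b)).div_const (Real.log 2)
  have hf : Tendsto f atTop (𝓝 0) := (tendsto_add_atTop_iff_nat 1).1 <|
    tendsto_of_tendsto_of_tendsto_of_le_of_le tendsto_const_nhds hlim
      (fun n => div_nonneg (Real.log_natCast_nonneg _)
        ((mul_nonneg (by positivity) hlog2.le).trans (hden n))) hbound
  exact ⟨hf.liminf_eq, hf.limsup_eq⟩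

end TreeDimension

section Arboreal

variable {K : Type*} [Field K]

theorem galP1_eq_of_mem_P1Rat {E : IntermediateField K (Kbar K)} {σ τ : Kbar K ≃ₐ[K] Kbar K}
    (hστ : ∀ x ∈ E, σ x = τ x) {β : P1 (Kbar K)} (hβ : β ∈ P1Rat E) :
    galP1 σ β = galP1 τ β := by
  rcases hβ with rfl | ⟨x, hx, rfl⟩
  · rfl
  · simp [galP1, hστ x hx]

theorem coverNum_arbGal_le_finrank (d : ℕ) (L : IntermediateField K (Kbar K))
    (φ : P1 (Kbar K) → P1 (Kbar K)) (α : P1 (Kbar K)) (E : IntermediateField K (Kbar K))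
    [FiniteDimensional K E] (n : ℕ)
    (hE : ∀ k ≤ n, ∀ β : preV φ α k, (β : P1 (Kbar K)) ∈ P1Rat E) :
    coverNum d (arbGal galP1 L φ α) n ≤ finrank K E := by
  set G := arbGal galP1 L φ α
  have hgal : ∀ y : restrictTo n '' G, ∃ σ : Kbar K ≃ₐ[K] Kbar K,
      ∀ k β, (y.1 k β : P1 (Kbar K)) = galP1 σ β := by
    rintro ⟨_, g, ⟨σ, -, hσ⟩, rfl⟩
    exact ⟨σ, fun k β => hσ k β⟩
  choose σ hσ using hgal
  have hinj : Function.Injective fun y => (σ y : Kbar K →ₐ[K] Kbar K).comp E.val := by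
    intro y₁ y₂ h
    refine Subtype.ext <| funext fun k => Equiv.ext fun β => Subtype.ext ?_
    rw [hσ, hσ]
    exact galP1_eq_of_mem_P1Rat (fun x hx => DFunLike.congr_fun h ⟨x, hx⟩)
      (hE k (Nat.lt_succ_iff.1 k.2) β)
  have := Finite.of_injective _ hinj
  calc coverNum d G n ≤ levelCard G n := coverNum_le_levelCard d n (Set.toFinite _)
    _ ≤ Nat.card (E →ₐ[K] Kbar K) := Nat.card_le_card_of_injective _ hinj
    _ ≤ finrank K E := card_algHom_le_finrank K E (Kbar K)

end Arboreal

section Moebius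

theorem moebius_moebius_inv {F : Type*} [Field F] {a b c e : F} (h : a * e - b * c ≠ 0)
    (x : P1 F) : moebius e (-b) (-c) a (moebius a b c e x) = x := by
  rcases x with _ | t
  · by_cases hc : c = 0
    · simp [moebius, hc]
    · have hinf : -c * (a / c) + a = 0 := by field_simp; ring
      simp only [moebius, if_neg hc, if_pos hinf]
  · by_cases hden : c * t + e = 0
    · have hc : c ≠ 0 := by
        rintro rfl
        apply h
        simp_all
      have hpole : e / -c = t := by field_simp; linear_combination -hden
      simp only [moebius, if_pos hden, if_neg (neg_ne_zero.2 hc), hpole]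
    · have hden' : -c * ((a * t + b) / (c * t + e)) + a = (a * e - b * c) / (c * t + e) := by
        field_simp; ring
      simp only [moebius, if_neg hden, hden', if_neg (div_ne_zero h hden), Option.some.injEq]
      rw [div_div_eq_mul_div, div_eq_iff h, mul_div_assoc', add_mul, div_mul_cancel₀ _ hden]
      ring

theorem moebius_mem_P1Rat {K : Type*} [Field K] {E : IntermediateField K (Kbar K)}
    {a b c e : Kbar K} (ha : a ∈ E) (hb : b ∈ E) (hc : c ∈ E) (he : e ∈ E) {x : P1 (Kbar K)}
    (hx : x ∈ P1Rat E) : moebius a b c e x ∈ P1Rat E := by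
  rcases hx with rfl | ⟨t, ht, rfl⟩
  · simp only [moebius]
    split_ifs
    · exact Or.inl rfl
    · exact Or.inr ⟨_, div_mem ha hc, rfl⟩
  · simp only [moebius]
    split_ifs
    · exact Or.inl rfl
    · exact Or.inr ⟨_, div_mem (add_mem (mul_mem ha ht) hb) (add_mem (mul_mem hc ht) he), rfl⟩

theorem mem_P1Rat_of_moebius_mem {K : Type*} [Field K] {E : IntermediateField K (Kbar K)}
    {a b c e : Kbar K} (hdet : a * e - b * c ≠ 0) (ha : a ∈ E) (hb : b ∈ E) (hc : c ∈ E)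
    (he : e ∈ E) {x : P1 (Kbar K)} (hx : moebius a b c e x ∈ P1Rat E) : x ∈ P1Rat E :=
  moebius_moebius_inv hdet x ▸ moebius_mem_P1Rat he (neg_mem hb) (neg_mem hc) ha hx

end Moebius

section PowerMap

variable {K : Type*} [Field K] {A : Type*} [Field A] [Algebra K A]

theorem ratAct_X_pow_some (d : ℕ) (t : A) :
    ratAct (X ^ d : K[X]) 1 A (some t) = some (t ^ d) := by
  simp [ratAct]

theorem ratAct_one_X_pow_some (d : ℕ) {t : A} (ht : t ≠ 0) :
    ratAct (1 : K[X]) (X ^ d) A (some t) = some (t ^ d)⁻¹ := by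
  simp [ratAct, ht]

theorem iterate_some_eq_of_pow_or_inv {g : P1 A → P1 A} {d : ℕ}
    (hg : ∀ t : A, t ≠ 0 → g (some t) = some (t ^ d) ∨ g (some t) = some (t ^ d)⁻¹)
    (k : ℕ) {t : A} (ht : t ≠ 0) :
    ∃ s, g^[k] (some t) = some s ∧ (t ^ d ^ k = s ∨ t ^ d ^ k = s⁻¹) := by
  induction k with
  | zero => exact ⟨t, rfl, Or.inl (by simp)⟩
  | succ k ih =>
    obtain ⟨s, hs, hts⟩ := ih
    have hs0 : s ≠ 0 := by
      rintro rfl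
      exact pow_ne_zero (d ^ k) ht (by simpa using hts)
    rw [pow_succ, pow_mul]
    rcases hg s hs0 with h | h <;>
      refine ⟨_, by rw [Function.iterate_succ_apply', hs, h], ?_⟩ <;>
      rcases hts with h' | h' <;> simp [h', inv_pow]

theorem mem_of_pow_eq_pow_of_isPrimitiveRoot {S : Type*} [SetLike S A] [SubfieldClass S A]
    {E : S} {ζ γ t : A} {m N : ℕ} [NeZero N] (hζ : IsPrimitiveRoot ζ N) (hζE : ζ ∈ E)
    (hγE : γ ∈ E) (hmN : m ∣ N) (ht : t ≠ 0) (htγ : t ^ m = γ ^ N) : t ∈ E := by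
  obtain ⟨j, rfl⟩ := hmN
  have hγ : γ ≠ 0 := by
    rintro rfl
    exact pow_ne_zero m ht (htγ.trans (zero_pow (NeZero.ne _)))
  have hunit : (t / γ ^ j) ^ (m * j) = 1 := by
    rw [pow_mul, div_pow, htγ, ← pow_mul, mul_comm j m, div_self (pow_ne_zero _ hγ), one_pow]
  obtain ⟨i, -, hi⟩ := hζ.eq_pow_of_pow_eq_one hunit
  have ht_eq : t = ζ ^ i * γ ^ j := by
    rw [hi, div_mul_cancel₀ _ (pow_ne_zero _ hγ)]
  exact ht_eq ▸ mul_mem (pow_mem hζE i) (pow_mem hγE j)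

end PowerMap

theorem finrank_adjoin_simple_le_of_pow_eq {K L : Type*} [Field K] [Field L] [Algebra K L]
    {γ z : L} {N : ℕ} (hN : N ≠ 0) (hz : IsIntegral K z) (hγ : γ ^ N = z) :
    finrank K K⟮γ⟯ ≤ (minpoly K z).natDegree * N := by
  set p := (minpoly K z).comp (X ^ N)
  have hp : p.Monic := (minpoly.monic hz).comp (monic_X_pow N) (by simpa using hN)
  have hpγ : aeval γ p = 0 := by simp [p, aeval_comp, hγ]
  calc finrank K K⟮γ⟯ = (minpoly K γ).natDegree := adjoin.finrank ⟨p, hp, hpγ⟩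
    _ ≤ p.natDegree := natDegree_le_of_dvd (minpoly.dvd K γ hpγ) hp.ne_zero
    _ = (minpoly K z).natDegree * N := by simp [p, natDegree_comp]

theorem finrank_sup_adjoin_roots_le {K L : Type*} [Field K] [Field L] [Algebra K L]
    (F : IntermediateField K L) {ζ γ z : L} {N : ℕ} (hN : N ≠ 0) (hz : IsIntegral K z)
    (hζ : ζ ^ N = 1) (hγ : γ ^ N = z) :
    finrank K ↥(F ⊔ K⟮ζ⟯ ⊔ K⟮γ⟯) ≤ finrank K F * (minpoly K z).natDegree * N ^ 2 := by
  have hζdeg : finrank K K⟮ζ⟯ ≤ N := by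
    have := finrank_adjoin_simple_le_of_pow_eq hN (isIntegral_one (R := K)) hζ
    rwa [minpoly.one, ← C_1, natDegree_X_sub_C, one_mul] at this
  calc finrank K ↥(F ⊔ K⟮ζ⟯ ⊔ K⟮γ⟯) ≤ finrank K F * N * ((minpoly K z).natDegree * N) :=
        (finrank_sup_le _ _).trans <| Nat.mul_le_mul
          ((finrank_sup_le _ _).trans (Nat.mul_le_mul_left _ hζdeg))
          (finrank_adjoin_simple_le_of_pow_eq hN hz hγ)
    _ = finrank K F * (minpoly K z).natDegree * N ^ 2 := by ring

section PowerMapConjugate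

variable {K : Type*} [Field K]

theorem mem_P1Rat_of_iterate_getD_eq {E : IntermediateField K (Kbar K)}
    {g : P1 (Kbar K) → P1 (Kbar K)} {d n k : ℕ} [NeZero d]
    (hg : ∀ t : Kbar K, t ≠ 0 → g (some t) = some (t ^ d) ∨ g (some t) = some (t ^ d)⁻¹)
    {ζ γ : Kbar K} (hζ : IsPrimitiveRoot ζ (d ^ n)) (hζE : ζ ∈ E) (hγE : γ ∈ E) (hk : k ≤ n)
    {w : P1 (Kbar K)} (hw : (g^[k] w).getD 0 = γ ^ d ^ n) : w ∈ P1Rat E := by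
  rcases w with _ | t
  · exact Or.inl rfl
  refine Or.inr ⟨t, ?_, rfl⟩
  rcases eq_or_ne t 0 with rfl | ht
  · exact zero_mem E
  obtain ⟨s, hs, hts⟩ := iterate_some_eq_of_pow_or_inv hg k ht
  rw [hs, Option.getD_some] at hw
  have hdvd : d ^ k ∣ d ^ n := pow_dvd_pow d hk
  rcases hts with h | h
  · exact mem_of_pow_eq_pow_of_isPrimitiveRoot hζ hζE hγE hdvd ht (h.trans hw)
  · exact inv_mem_iff.1 <| mem_of_pow_eq_pow_of_isPrimitiveRoot hζ hζE hγE hdvd (inv_ne_zero ht)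
      (by rw [inv_pow, h, hw, inv_inv])

theorem preV_mem_P1Rat_of_semiconj {E : IntermediateField K (Kbar K)}
    {φ g : P1 (Kbar K) → P1 (Kbar K)} {α : P1 (Kbar K)} {a b c e : Kbar K}
    (hdet : a * e - b * c ≠ 0) (ha : a ∈ E) (hb : b ∈ E) (hc : c ∈ E) (he : e ∈ E)
    (hφg : Function.Semiconj (moebius a b c e) φ g) {d n : ℕ} [NeZero d]
    (hg : ∀ t : Kbar K, t ≠ 0 → g (some t) = some (t ^ d) ∨ g (some t) = some (t ^ d)⁻¹)
    {ζ γ : Kbar K} (hζ : IsPrimitiveRoot ζ (d ^ n)) (hζE : ζ ∈ E) (hγE : γ ∈ E)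
    (hγ : γ ^ d ^ n = (moebius a b c e α).getD 0) :
    ∀ k ≤ n, ∀ β : preV φ α k, (β : P1 (Kbar K)) ∈ P1Rat E := fun k hk β =>
  mem_P1Rat_of_moebius_mem hdet ha hb hc he <| mem_P1Rat_of_iterate_getD_eq hg hζ hζE hγE hk <| by
    rw [← (hφg.iterate_right k) β, β.2, hγ]

theorem coverNum_arbGal_le_of_semiconj (L : IntermediateField K (Kbar K))
    {φ g : P1 (Kbar K) → P1 (Kbar K)} {α : P1 (Kbar K)} {a b c e : Kbar K}
    (hdet : a * e - b * c ≠ 0) (hφg : Function.Semiconj (moebius a b c e) φ g) {d n : ℕ}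
    [NeZero d]
    (hg : ∀ t : Kbar K, t ≠ 0 → g (some t) = some (t ^ d) ∨ g (some t) = some (t ^ d)⁻¹)
    {ζ γ : Kbar K} (hζ : IsPrimitiveRoot ζ (d ^ n))
    (hγ : γ ^ d ^ n = (moebius a b c e α).getD 0) :
    coverNum d (arbGal galP1 L φ α) n ≤
      finrank K K⟮a, b, c, e⟯ * (minpoly K ((moebius a b c e α).getD 0)).natDegree *
        (d ^ n) ^ 2 := by
  have hint (x : Kbar K) : IsIntegral K x := Algebra.IsIntegral.isIntegral x
  have := finiteDimensional_adjoin (K := K) (S := {a, b, c, e}) fun x _ => hint x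
  have := adjoin.finiteDimensional (hint ζ)
  have := adjoin.finiteDimensional (hint γ)
  set E := K⟮a, b, c, e⟯ ⊔ K⟮ζ⟯ ⊔ K⟮γ⟯
  have hcoeff {x : Kbar K} (hx : x ∈ ({a, b, c, e} : Set (Kbar K))) : x ∈ E :=
    (le_sup_left.trans le_sup_left : K⟮a, b, c, e⟯ ≤ E) (subset_adjoin K _ hx)
  have hζE : ζ ∈ E := (le_sup_right.trans le_sup_left : K⟮ζ⟯ ≤ E) (mem_adjoin_simple_self K ζ)
  have hγE : γ ∈ E := (le_sup_right : K⟮γ⟯ ≤ E) (mem_adjoin_simple_self K γ)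
  calc coverNum d _ n ≤ finrank K E := coverNum_arbGal_le_finrank d L φ α E n <|
        preV_mem_P1Rat_of_semiconj hdet (hcoeff (by simp)) (hcoeff (by simp)) (hcoeff (by simp))
          (hcoeff (by simp)) hφg hg hζ hζE hγE hγ
    _ ≤ _ := finrank_sup_adjoin_roots_le _ (NeZero.ne _) (hint _) hζ.pow_eq_one hγ

end PowerMapConjugate

theorem arboreal_power_maps_small_general {K : Type*} [Field K] [NumberField K] {d : ℕ}
    (hd : 2 ≤ d) (p q : Polynomial K) (α : P1 K)
    (hpow : ∃ a b c e : Kbar K, a * e - b * c ≠ 0 ∧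
      ((∀ x : P1 (Kbar K), moebius a b c e (ratAct p q (Kbar K) x) =
          ratAct (Polynomial.X ^ d : Polynomial K) 1 (Kbar K) (moebius a b c e x)) ∨
        (∀ x : P1 (Kbar K), moebius a b c e (ratAct p q (Kbar K) x) =
          ratAct (1 : Polynomial K) (Polynomial.X ^ d) (Kbar K) (moebius a b c e x)))) :
    HasDim d (arbGal (K := K) galP1 ⊥ (ratAct p q (Kbar K)) (P1K α)) 0 := by
  obtain ⟨a, b, c, e, hdet, hconj⟩ := hpow
  obtain ⟨g, hsemi, hg⟩ : ∃ g : P1 (Kbar K) → P1 (Kbar K),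
      Function.Semiconj (moebius a b c e) (ratAct p q (Kbar K)) g ∧
        ∀ t : Kbar K, t ≠ 0 → g (some t) = some (t ^ d) ∨ g (some t) = some (t ^ d)⁻¹ := by
    rcases hconj with h | h
    · exact ⟨_, h, fun t _ => Or.inl (ratAct_X_pow_some d t)⟩
    · exact ⟨_, h, fun t ht => Or.inr (ratAct_one_X_pow_some d ht)⟩
  set z := (moebius a b c e (P1K α)).getD 0
  have : NeZero d := ⟨by omega⟩
  refine hasDim_zero_of_coverNum_le hd (finrank K K⟮a, b, c, e⟯ * (minpoly K z).natDegree) (d ^ 2)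
    fun n => ?_
  obtain ⟨ζ, hζ⟩ := HasEnoughRootsOfUnity.exists_primitiveRoot (Kbar K) (d ^ n)
  obtain ⟨γ, hγ⟩ := IsAlgClosed.exists_pow_nat_eq z (NeZero.pos (d ^ n))
  calc coverNum d _ n ≤ finrank K K⟮a, b, c, e⟯ * (minpoly K z).natDegree * (d ^ n) ^ 2 :=
        coverNum_arbGal_le_of_semiconj ⊥ hdet hsemi hg hζ hγ
    _ = finrank K K⟮a, b, c, e⟯ * (minpoly K z).natDegree * (d ^ 2) ^ n := by ring

theorem arboreal_power_maps_small {K : Type*} [Field K] [NumberField K] {d : ℕ}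
    (hd : 2 ≤ d) (p q : Polynomial K) (hf : IsCoprime p q)
    (hdeg : max p.natDegree q.natDegree = d) (α : P1 K)
    (hpow : ∃ a b c e : Kbar K, a * e - b * c ≠ 0 ∧
      ((∀ x : P1 (Kbar K), moebius a b c e (ratAct p q (Kbar K) x) =
          ratAct (Polynomial.X ^ d : Polynomial K) 1 (Kbar K) (moebius a b c e x)) ∨
        (∀ x : P1 (Kbar K), moebius a b c e (ratAct p q (Kbar K) x) =
          ratAct (1 : Polynomial K) (Polynomial.X ^ d) (Kbar K) (moebius a b c e x)))) :
    HasDim d (arbGal (K := K) galP1 ⊥ (ratAct p q (Kbar K)) (P1K α)) 0 :=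
  arboreal_power_maps_small_general hd p q α hpow
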